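/- With qᵢ(x) = exp(−π(x − Ci)²), σ = 1/√(2π), and γ := exp(−π(σ − C)²) for spacing C > σ, for every weight vector h ∈ ℝ₊^{t+1} and index i: hᵢ ≤ q[h](xᵢ) ≤ max_{x ∈ B_σ(xᵢ)} q[h](x) ≤ hᵢ + γ·Σ_{j≠i} h_j. -/
import Mathlib


noncomputable def unitGauss (C : ℝ) (i : ℕ) (x : ℝ) : ℝ :=
  Real.exp (-Real.pi * (x - C * i) ^ 2)

noncomputable def gaussSigma : ℝ := 1 / Real.sqrt (2 * Real.pi)

lemma gaussSigma_pos : 0 < gaussSigma := by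
  unfold gaussSigma
  positivity

/-- Claim 1 of Theorem 3.3: with `γ = exp(−π(σ−C)²)` and
spacing `C > σ`, for every nonnegative weight vector `h` and index `i`:
`hᵢ ≤ q[h](xᵢ)`, `q[h](xᵢ) ≤ q[h](x)` is dominated on the ball, and
`q[h](x) ≤ hᵢ + γ·Σ_{j≠i} h_j` for all `x ∈ B_σ(xᵢ)`. -/
theorem gaussian_mixture_sandwich
    (t : ℕ) (C : ℝ) (hC : gaussSigma < C)
    (h : Fin (t + 1) → ℝ) (hnonneg : ∀ i, 0 ≤ h i) (i : Fin (t + 1)) :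
    h i ≤ (∑ j : Fin (t + 1), h j * unitGauss C j (C * (i : ℝ))) ∧
    (∀ x, |x - C * (i : ℝ)| < gaussSigma →
      (∑ j : Fin (t + 1), h j * unitGauss C j x)
        ≤ h i + Real.exp (-Real.pi * (gaussSigma - C) ^ 2)
            * ∑ j ∈ Finset.univ.erase i, h j) := by
  have hσ := gaussSigma_pos
  have hCpos : 0 < C := lt_trans hσ hC
  have hgauss_nonneg : ∀ (j : ℕ) (x : ℝ), 0 ≤ unitGauss C j x := fun j x =>
    (Real.exp_pos _).le
  constructor
  · have hterm : h i * unitGauss C i (C * (i : ℝ)) = h i := by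
      unfold unitGauss
      simp
    calc h i = h i * unitGauss C i (C * (i : ℝ)) := hterm.symm
      _ ≤ ∑ j : Fin (t + 1), h j * unitGauss C j (C * (i : ℝ)) := by
          apply Finset.single_le_sum (f := fun j : Fin (t+1) => h j * unitGauss C j (C * (i : ℝ)))
          · intro j _
            exact mul_nonneg (hnonneg j) (hgauss_nonneg j _)
          · exact Finset.mem_univ i
  · intro x hx
    have hkey : ∀ j : Fin (t + 1), j ≠ i →
        unitGauss C j x ≤ Real.exp (-Real.pi * (gaussSigma - C) ^ 2) := by
      intro j hji
      unfold unitGauss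
      apply Real.exp_le_exp.mpr
      have hsq : (gaussSigma - C) ^ 2 ≤ (x - C * j) ^ 2 := by
        rw [← sq_abs (gaussSigma - C), ← sq_abs (x - C * j)]
        apply pow_le_pow_left₀ (abs_nonneg _)
        have h1 : |gaussSigma - C| = C - gaussSigma := by
          rw [abs_sub_comm, abs_of_pos (by linarith)]
        rw [h1]
        -- distance between centers
        have hij : (1 : ℝ) ≤ |(i : ℝ) - (j : ℝ)| := by
          have : (i : ℕ) ≠ (j : ℕ) := fun hh => hji (Fin.ext hh.symm)
          have h2 : ((i : ℕ) : ℝ) - ((j : ℕ) : ℝ) = ((i : ℤ) - (j : ℤ) : ℤ) := by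
            push_cast; ring
          rw [h2]
          rw [← Int.cast_abs]
          have : (1 : ℤ) ≤ |(i : ℤ) - (j : ℤ)| := by
            have hne : ((i : ℕ) : ℤ) ≠ ((j : ℕ) : ℤ) := by exact_mod_cast this
            exact Int.one_le_abs (sub_ne_zero.mpr hne)
          exact_mod_cast this
        have hcenters : C ≤ |C * (i : ℝ) - C * (j : ℝ)| := by
          rw [← mul_sub, abs_mul, abs_of_pos hCpos]
          nlinarith [abs_nonneg ((i : ℝ) - (j : ℝ))]
        have htri : |C * (i : ℝ) - C * (j : ℝ)| ≤ |C * (i : ℝ) - x| + |x - C * (j : ℝ)| := by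
          exact abs_sub_le _ _ _
        rw [abs_sub_comm (C * (i : ℝ)) x] at htri
        linarith
      linarith [mul_le_mul_of_nonneg_left hsq Real.pi_pos.le]
    set γ := Real.exp (-Real.pi * (gaussSigma - C) ^ 2) with hγ
    have hsplit : (∑ j : Fin (t + 1), h j * unitGauss C j x)
        = h i * unitGauss C i x + ∑ j ∈ Finset.univ.erase i, h j * unitGauss C j x := by
      exact (Finset.add_sum_erase _ (fun j => h j * unitGauss C j x) (Finset.mem_univ i)).symm
    rw [hsplit]
    have h1 : h i * unitGauss C i x ≤ h i := by
      have : unitGauss C i x ≤ 1 := by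
        unfold unitGauss
        rw [show (1 : ℝ) = Real.exp 0 by simp]
        apply Real.exp_le_exp.mpr
        nlinarith [sq_nonneg (x - C * (i : ℝ)), Real.pi_pos]
      nlinarith [hnonneg i]
    have h2 : ∑ j ∈ Finset.univ.erase i, h j * unitGauss C j x
        ≤ γ * ∑ j ∈ Finset.univ.erase i, h j := by
      rw [Finset.mul_sum]
      apply Finset.sum_le_sum
      intro j hj
      have hji : j ≠ i := Finset.ne_of_mem_erase hj
      calc h j * unitGauss C j x ≤ h j * γ :=
            mul_le_mul_of_nonneg_left (hkey j hji) (hnonneg j)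
        _ = γ * h j := mul_comm _ _
    linarith
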